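/- For any sequence of vectors x_1,...,x_T in ℝ^d with ‖x_t‖ ≤ L, and V_t = λI + Σ_{s≤t} x_s x_sᵀ with λ > 0, the elliptical potential bound holds: Σ_{t=1}^T min(1, ‖x_t‖²_{V_{t-1}^{-1}}) ≤ 2 d log(1 + T L² / (λ d)), where ‖x‖²_{V^{-1}} = xᵀ V^{-1} x. -/

import Mathlib

/-! The matrix determinant lemma gives `det V_{t+1} = det V_t * (1 + ‖x_t‖²_{V_t⁻¹})`, so the sum of
`log (1 + ‖x_t‖²_{V_t⁻¹})` telescopes to `log det V_T - log det V_0`, and `min 1 u ≤ 2 log (1 + u)`.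
AM-GM on the eigenvalues bounds `det V_T` by `(tr V_T / d) ^ d`, and `tr V_T ≤ λ d + T L²`. -/

open Matrix Finset Real

theorem Real.min_one_le_two_mul_log_one_add {u : ℝ} (hu : 0 ≤ u) : min 1 u ≤ 2 * log (1 + u) := by
  have hlog : 1 - (1 + u)⁻¹ ≤ log (1 + u) := one_sub_inv_le_log_of_pos (by positivity)
  have hmin : min 1 u ≤ 2 * (1 - (1 + u)⁻¹) := by
    have hinv : (1 + u)⁻¹ * (1 + u) = 1 := inv_mul_cancel₀ (by positivity)
    have hinv_le : (1 + u)⁻¹ ≤ 1 := inv_le_one_of_one_le₀ (by linarith)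
    rcases le_total u 1 with h | h
    · rw [min_eq_right h]; nlinarith
    · rw [min_eq_left h]; nlinarith
  linarith

theorem Real.prod_le_sum_div_card_pow {ι : Type*} (s : Finset ι) (z : ι → ℝ)
    (hz : ∀ i ∈ s, 0 ≤ z i) : ∏ i ∈ s, z i ≤ ((∑ i ∈ s, z i) / #s) ^ #s := by
  rcases s.eq_empty_or_nonempty with rfl | hs
  · simp
  have hcard : (0 : ℝ) < #s := by exact_mod_cast hs.card_pos
  have hamgm := geom_mean_le_arith_mean_weighted s (fun _ => (#s : ℝ)⁻¹) z
    (fun _ _ => by positivity) (by simp [hcard.ne']) hz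
  rw [← Finset.mul_sum, inv_mul_eq_div, Real.finsetProd_rpow s z hz] at hamgm
  calc ∏ i ∈ s, z i = ((∏ i ∈ s, z i) ^ (#s : ℝ)⁻¹) ^ #s := by
        rw [← Real.rpow_natCast, ← Real.rpow_mul (prod_nonneg hz), inv_mul_cancel₀ hcard.ne',
          Real.rpow_one]
    _ ≤ _ := pow_le_pow_left₀ (Real.rpow_nonneg (prod_nonneg hz) _) hamgm _

namespace Matrix

variable {n : Type*} [Fintype n] [DecidableEq n]

theorem det_add_vecMulVec {R : Type*} [CommRing R] {A : Matrix n n R} (hA : IsUnit A.det)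
    (u v : n → R) : (A + vecMulVec u v).det = A.det * (1 + v ⬝ᵥ A⁻¹ *ᵥ u) := by
  rw [vecMulVec_eq Unit, det_add_replicateCol_mul_replicateRow hA, Matrix.mul_assoc,
    ← replicateCol_mulVec, det_unique (1 + _ : Matrix Unit Unit R), add_apply, one_apply_eq,
    replicateRow_mul_replicateCol_apply]

theorem PosDef.dotProduct_inv_mulVec_self_nonneg {A : Matrix n n ℝ} (hA : A.PosDef)
    (u : n → ℝ) : 0 ≤ u ⬝ᵥ A⁻¹ *ᵥ u := by
  simpa using hA.inv.posSemidef.dotProduct_mulVec_nonneg u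

theorem PosSemidef.det_le_trace_div_card_pow {A : Matrix n n ℝ} (hA : A.PosSemidef) :
    A.det ≤ (A.trace / Fintype.card n) ^ Fintype.card n := by
  rw [hA.isHermitian.det_eq_prod_eigenvalues, hA.isHermitian.trace_eq_sum_eigenvalues]
  simpa using prod_le_sum_div_card_pow univ _ fun i _ => hA.eigenvalues_nonneg i

theorem PosDef.log_det_le {A : Matrix n n ℝ} (hA : A.PosDef) :
    log A.det ≤ Fintype.card n * log (A.trace / Fintype.card n) := by
  rw [← log_pow]
  exact log_le_log hA.det_pos hA.posSemidef.det_le_trace_div_card_pow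

end Matrix

section DesignMatrix

variable {n : Type*}

def designMatrix (A : Matrix n n ℝ) (x : ℕ → n → ℝ) (t : ℕ) : Matrix n n ℝ :=
  A + ∑ s ∈ range t, vecMulVec (x s) (x s)

variable {A : Matrix n n ℝ} {x : ℕ → n → ℝ}

@[simp]
theorem designMatrix_zero : designMatrix A x 0 = A := by
  simp [designMatrix]

theorem designMatrix_succ (t : ℕ) :
    designMatrix A x (t + 1) = designMatrix A x t + vecMulVec (x t) (x t) := by
  rw [designMatrix, designMatrix, sum_range_succ, add_assoc]

theorem Matrix.PosDef.designMatrix [Fintype n] (hA : A.PosDef) (t : ℕ) :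
    (designMatrix A x t).PosDef :=
  hA.add_posSemidef <| posSemidef_sum _ fun s _ => by
    simpa using posSemidef_vecMulVec_self_star (x s)

theorem trace_designMatrix [Fintype n] (t : ℕ) :
    (designMatrix A x t).trace = A.trace + ∑ s ∈ range t, x s ⬝ᵥ x s := by
  simp [designMatrix, trace_add, trace_sum, trace_vecMulVec]

theorem sum_log_one_add_eq_log_det_designMatrix_sub [Fintype n] [DecidableEq n] (hA : A.PosDef)
    (T : ℕ) : ∑ t ∈ range T, log (1 + x t ⬝ᵥ (designMatrix A x t)⁻¹ *ᵥ x t)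
      = log (designMatrix A x T).det - log A.det := by
  have htelescope := sum_range_sub (fun t => log (designMatrix A x t).det) T
  rw [designMatrix_zero] at htelescope
  rw [← htelescope]
  refine sum_congr rfl fun t _ => ?_
  have hpos := hA.designMatrix (x := x) t
  rw [designMatrix_succ, det_add_vecMulVec hpos.det_pos.ne'.isUnit,
    log_mul hpos.det_pos.ne' (by linarith [hpos.dotProduct_inv_mulVec_self_nonneg (x t)])]
  ring

theorem trace_designMatrix_le [Fintype n] {L : ℝ} (hx : ∀ t, x t ⬝ᵥ x t ≤ L ^ 2) (T : ℕ) :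
    (designMatrix A x T).trace ≤ A.trace + T * L ^ 2 := by
  rw [trace_designMatrix]
  gcongr
  simpa using sum_le_sum fun t (_ : t ∈ range T) => hx t

theorem sum_min_one_le_two_mul_log_det_designMatrix_sub [Fintype n] [DecidableEq n]
    (hA : A.PosDef) (T : ℕ) :
    ∑ t ∈ range T, min 1 (x t ⬝ᵥ (designMatrix A x t)⁻¹ *ᵥ x t)
      ≤ 2 * (log (designMatrix A x T).det - log A.det) := by
  rw [← sum_log_one_add_eq_log_det_designMatrix_sub hA, mul_sum]
  exact sum_le_sum fun t _ =>
    min_one_le_two_mul_log_one_add ((hA.designMatrix t).dotProduct_inv_mulVec_self_nonneg _)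

theorem log_det_designMatrix_smul_one_sub_le [Fintype n] [DecidableEq n] [Nonempty n]
    {lam L : ℝ} (hlam : 0 < lam) (hx : ∀ t, x t ⬝ᵥ x t ≤ L ^ 2) (T : ℕ) :
    log (designMatrix (lam • 1) x T).det - log (lam • 1 : Matrix n n ℝ).det
      ≤ Fintype.card n * log (1 + T * L ^ 2 / (lam * Fintype.card n)) := by
  set d : ℝ := (Fintype.card n : ℝ)
  have hd : 0 < d := by positivity
  have hpos := (PosDef.one.smul hlam).designMatrix (x := x) T
  have htrace : (designMatrix (lam • 1) x T).trace / d ≤ lam * (1 + T * L ^ 2 / (lam * d)) := by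
    have hrhs : lam * (1 + T * L ^ 2 / (lam * d)) * d = lam * d + T * L ^ 2 := by
      field_simp
    rw [div_le_iff₀ hd, hrhs]
    simpa [d] using trace_designMatrix_le (A := lam • 1) hx T
  have hlog_det_zero : log (lam • 1 : Matrix n n ℝ).det = d * log lam := by
    simp [d, log_pow]
  calc log (designMatrix (lam • 1) x T).det - log (lam • 1 : Matrix n n ℝ).det
      ≤ d * log ((designMatrix (lam • 1) x T).trace / d) - d * log lam := by
        rw [hlog_det_zero]
        exact sub_le_sub_right hpos.log_det_le _
    _ ≤ d * log (lam * (1 + T * L ^ 2 / (lam * d))) - d * log lam :=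
        sub_le_sub_right
          (mul_le_mul_of_nonneg_left (log_le_log (div_pos hpos.trace_pos hd) htrace) hd.le) _
    _ = d * log (1 + T * L ^ 2 / (lam * d)) := by
        rw [log_mul hlam.ne' (by positivity)]
        ring

end DesignMatrix

theorem elliptical_potential_general (d T : ℕ) (L lam : ℝ) (hlam : 0 < lam)
    (x : ℕ → Fin d → ℝ) (hx : ∀ t, Real.sqrt (∑ i, (x t i) ^ 2) ≤ L)
    (V : ℕ → Matrix (Fin d) (Fin d) ℝ)
    (hV : ∀ n, V n = lam • (1 : Matrix (Fin d) (Fin d) ℝ)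
        + ∑ s ∈ Finset.range n, Matrix.vecMulVec (x s) (x s)) :
    ∑ t ∈ Finset.range T, min 1 (x t ⬝ᵥ ((V t)⁻¹ *ᵥ x t))
      ≤ 2 * d * Real.log (1 + T * L ^ 2 / (lam * d)) := by
  obtain rfl | hd := Nat.eq_zero_or_pos d
  · simp
  have : Nonempty (Fin d) := ⟨⟨0, hd⟩⟩
  obtain rfl : V = designMatrix (lam • 1) x := funext hV
  have hnorm_sq : ∀ t, x t ⬝ᵥ x t ≤ L ^ 2 := fun t => by
    simpa [dotProduct, sq] using (sqrt_le_iff.1 (hx t)).2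
  calc _ ≤ 2 * (log (designMatrix (lam • 1) x T).det - log (lam • 1 : Matrix _ _ ℝ).det) :=
        sum_min_one_le_two_mul_log_det_designMatrix_sub (PosDef.one.smul hlam) T
    _ ≤ 2 * (d * log (1 + T * L ^ 2 / (lam * d))) := by
        gcongr
        simpa using log_det_designMatrix_smul_one_sub_le hlam hnorm_sq T
    _ = 2 * d * log (1 + T * L ^ 2 / (lam * d)) := by ring

/-- Elliptical potential lemma: `∑_t min(1, ‖x_t‖²_{V_{t-1}⁻¹}) ≤ 2d log(1 + TL²/(λd))`. -/
theorem elliptical_potential (d T : ℕ) (hd : 0 < d) (L lam : ℝ) (hlam : 0 < lam)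
    (x : ℕ → Fin d → ℝ) (hx : ∀ t, Real.sqrt (∑ i, (x t i) ^ 2) ≤ L)
    (V : ℕ → Matrix (Fin d) (Fin d) ℝ)
    (hV : ∀ n, V n = lam • (1 : Matrix (Fin d) (Fin d) ℝ)
        + ∑ s ∈ Finset.range n, Matrix.vecMulVec (x s) (x s)) :
    ∑ t ∈ Finset.range T, min 1 (x t ⬝ᵥ ((V t)⁻¹ *ᵥ x t))
      ≤ 2 * d * Real.log (1 + T * L ^ 2 / (lam * d)) :=
  elliptical_potential_general d T L lam hlam x hx V hV
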